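/- Separation of stable leaves under minimal captivity (Lemma 7.8, second inequality): Let τ ∈ C^∞(φ(I);ℝ) and define the canonical maps φ̃_{i,j}(x,ξ) := (φ_{i,j}(x), ξ/φ'_{i,j}(x) + τ'(φ_{i,j}(x))) and the stable-leaf functions ζ_{w_+}(x) := −∑_{k≥1} (φ_{w_{0,k}})'(x) τ'(φ_{w_{0,k}}(x)). Assume minimal captivity: there exists ε > 0 such that for every point (x,ξ) of the closed ε-neighborhood 𝒦_ε of the trapped set 𝒦 of the multivalued map φ̃, at most one of the points φ̃_{i,j}(x,ξ) (over j with i ⤳ j, where x ∈ I_i) lies in 𝒦_ε. Assume a ∈ ℕ is such that K_a := φ^a(I) satisfies (x, ζ_{w_+}(x)) ∈ 𝒦_ε for every w_+ ∈ W_+ and every x ∈ K_a ∩ I_{w_0}. Then there exists C > 0 such that for all w_+, w'_+ ∈ W_+ with w_0 = w'_0 and w_+ ≠ w'_+, setting n_1 := min{k ≥ 0 : w_k ≠ w'_k} (so n_1 ≥ 1), one has for every x ∈ K_a ∩ I_{w_0}: |ζ_{w_+}(x) − ζ_{w'_+}(x)| ≥ C · (φ_{w_{0,n_1−1}})'(x),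 with the convention that the empty composition (n_1 = 1) is the identity. -/

import Mathlib

open Set

/-- Right-infinite admissible words. -/
def Wplus (N : ℕ) (adj : Fin N → Fin N → Prop) : Type :=
  {w : ℕ → Fin N // ∀ n : ℕ, adj (w n) (w (n + 1))}

/-- Forward composition `φ_{w_{0,k}} = φ_{w_{k−1},w_k} ∘ ⋯ ∘ φ_{w_0,w_1}`
(an empty composition, `k = 0`, is the identity). -/
def compFwd {N : ℕ} (φm : Fin N → Fin N → ℝ → ℝ) (w : ℕ → Fin N) : ℕ → ℝ → ℝ
  | 0 => id
  | k + 1 => φm (w k) (w (k + 1)) ∘ compFwd φm w k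

/-- The canonical map of one branch,
`φ̃_{i,j}(x,ξ) = (φ_{i,j}(x), ξ/φ'_{i,j}(x) + τ'(φ_{i,j}(x)))`. -/
noncomputable def canMap (τ : ℝ → ℝ) (φij : ℝ → ℝ) (p : ℝ × ℝ) : ℝ × ℝ :=
  (φij p.1, p.2 / deriv φij p.1 + deriv τ (φij p.1))

/-- The stable-leaf function
`ζ_{w₊}(x) = −∑_{k≥1} (φ_{w_{0,k}})'(x) τ'(φ_{w_{0,k}}(x))`. -/
noncomputable def zetaW {N : ℕ} (φm : Fin N → Fin N → ℝ → ℝ) (τ : ℝ → ℝ)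
    (w : ℕ → Fin N) (x : ℝ) : ℝ :=
  -∑' k : ℕ, deriv (compFwd φm w (k + 1)) x * deriv τ (compFwd φm w (k + 1) x)

/-- The trapped set `𝒦 ⊂ I × ℝ` of the multivalued canonical map: points
through which there passes a complete bounded admissible orbit. -/
def trappedPhase {N : ℕ} (I : Fin N → Set ℝ) (adj : Fin N → Fin N → Prop)
    (φm : Fin N → Fin N → ℝ → ℝ) (τ : ℝ → ℝ) : Set (ℝ × ℝ) :=
  {p | ∃ (b : ℤ → Fin N) (q : ℤ → ℝ × ℝ),
    q 0 = p ∧ (∀ k : ℤ, adj (b k) (b (k + 1))) ∧ (∀ k : ℤ, (q k).1 ∈ I (b k)) ∧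
    (∀ k : ℤ, q (k + 1) = canMap τ (φm (b k) (b (k + 1))) (q k)) ∧
    ∃ R : ℝ, ∀ k : ℤ, |(q k).2| ≤ R}

/-- The closed `ε`-neighborhood `𝒦_ε` of the trapped set. -/
def trappedPhaseNbhd {N : ℕ} (I : Fin N → Set ℝ) (adj : Fin N → Fin N → Prop)
    (φm : Fin N → Fin N → ℝ → ℝ) (τ : ℝ → ℝ) (ε : ℝ) : Set (ℝ × ℝ) :=
  {p | ∃ q ∈ trappedPhase I adj φm τ, max |p.1 - q.1| |p.2 - q.2| ≤ ε}

/-- `K_a = φ^a(I)`: the union of the images of the intervals under all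
admissible words of length `a + 1`. -/
def Kiter {N : ℕ} (I : Fin N → Set ℝ) (adj : Fin N → Fin N → Prop)
    (φm : Fin N → Fin N → ℝ → ℝ) (a : ℕ) : Set ℝ :=
  ⋃ (v : ℕ → Fin N) (_ : ∀ k < a, adj (v k) (v (k + 1))), compFwd φm v a '' I (v 0)

/-
Splitting off the first `m` terms of the series gives the self-similarity
`ζ_w(x) = -∑_{k<m} (…) + (φ_{w_{0,m}})'(x) ζ_{σ^m w}(φ_{w_{0,m}}(x))`, so for two words agreeing
up to `n₁ - 1` the difference `ζ_w(x) - ζ_{w'}(x)` is `(φ_{w_{0,n₁-1}})'(x)` times the difference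
of two leaves branching at their first letter, taken at a point of `K_a`. The canonical map sends
the graph of `ζ_v` to that of `ζ_{σv}`, and `K_a` is forward invariant; so if two leaves branching
at the first letter met over a point of `K_a`, that point of `𝒦_ε` would have two branch images in
`𝒦_ε`, contradicting minimal captivity. The difference of the two leaves is continuous on the
compact set of branching pairs of words (product topology) and points of `K_a`, hence bounded
below by some `C > 0`.
-/
section

variable {N : ℕ} {adj : Fin N → Fin N → Prop} {φm : Fin N → Fin N → ℝ → ℝ}

def IsAdmissible (adj : Fin N → Fin N → Prop) (w : ℕ → Fin N) : Prop :=
  ∀ n, adj (w n) (w (n + 1))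

def wordShift {α : Type*} (m : ℕ) (w : ℕ → α) : ℕ → α := fun n => w (m + n)

theorem IsAdmissible.wordShift {w : ℕ → Fin N} (hw : IsAdmissible adj w) (m : ℕ) :
    IsAdmissible adj (wordShift m w) :=
  fun n => hw (m + n)

theorem compFwd_one (w : ℕ → Fin N) : compFwd φm w 1 = φm (w 0) (w 1) := rfl

theorem compFwd_congr {w w' : ℕ → Fin N} : ∀ {k : ℕ}, (∀ n ≤ k, w n = w' n) →
    compFwd φm w k = compFwd φm w' k
  | 0, _ => rfl
  | k + 1, h => by
    simp only [compFwd, h k k.le_succ, h (k + 1) le_rfl,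
      compFwd_congr fun n hn => h n (hn.trans k.le_succ)]

theorem compFwd_add (w : ℕ → Fin N) (m : ℕ) : ∀ k,
    compFwd φm w (m + k) = compFwd φm (wordShift m w) k ∘ compFwd φm w m
  | 0 => rfl
  | k + 1 => by
    rw [← add_assoc, compFwd, compFwd_add w m k]
    rfl

theorem mapsTo_compFwd {I : Fin N → Set ℝ} (hmaps : ∀ i j, adj i j → MapsTo (φm i j) (I i) (I j))
    (w : ℕ → Fin N) : ∀ k, (∀ j < k, adj (w j) (w (j + 1))) →
    MapsTo (compFwd φm w k) (I (w 0)) (I (w k))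
  | 0, _ => mapsTo_id _
  | k + 1, hw => (hmaps _ _ (hw k k.lt_succ_self)).comp
      (mapsTo_compFwd hmaps w k fun j hj => hw j (hj.trans k.lt_succ_self))

theorem contDiff_compFwd {n : WithTop ℕ∞} (hφ : ∀ i j, adj i j → ContDiff ℝ n (φm i j))
    (w : ℕ → Fin N) : ∀ k, (∀ j < k, adj (w j) (w (j + 1))) → ContDiff ℝ n (compFwd φm w k)
  | 0, _ => contDiff_id
  | k + 1, hw => (hφ _ _ (hw k k.lt_succ_self)).comp
      (contDiff_compFwd hφ w k fun j hj => hw j (hj.trans k.lt_succ_self))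

theorem deriv_compFwd_succ (hφ : ∀ i j, adj i j → ContDiff ℝ 1 (φm i j)) (w : ℕ → Fin N)
    (k : ℕ) (hw : ∀ j < k + 1, adj (w j) (w (j + 1))) (x : ℝ) :
    deriv (compFwd φm w (k + 1)) x
      = deriv (φm (w k) (w (k + 1))) (compFwd φm w k x) * deriv (compFwd φm w k) x :=
  deriv_comp x ((hφ _ _ (hw k k.lt_succ_self)).differentiable one_ne_zero _)
    ((contDiff_compFwd hφ w k fun j hj => hw j (hj.trans k.lt_succ_self)).differentiable
      one_ne_zero _)

theorem deriv_compFwd_add (hφ : ∀ i j, adj i j → ContDiff ℝ 1 (φm i j)) (w : ℕ → Fin N)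
    (m k : ℕ) (hw : ∀ j < m + k, adj (w j) (w (j + 1))) (x : ℝ) :
    deriv (compFwd φm w (m + k)) x
      = deriv (compFwd φm (wordShift m w) k) (compFwd φm w m x) * deriv (compFwd φm w m) x := by
  rw [compFwd_add]
  exact deriv_comp x
    ((contDiff_compFwd hφ _ k fun j hj => hw (m + j) (by omega)).differentiable one_ne_zero _)
    ((contDiff_compFwd hφ w m fun j hj => hw j (by omega)).differentiable one_ne_zero _)

structure IsContractingIFS (I : Fin N → Set ℝ) (adj : Fin N → Fin N → Prop)
    (φm : Fin N → Fin N → ℝ → ℝ) (θ : ℝ) : Prop where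
  contDiff : ∀ i j, adj i j → ContDiff ℝ 1 (φm i j)
  mapsTo : ∀ i j, adj i j → MapsTo (φm i j) (I i) (I j)
  deriv_pos : ∀ i j, adj i j → ∀ x ∈ I i, 0 < deriv (φm i j) x
  deriv_le : ∀ i j, adj i j → ∀ x ∈ I i, deriv (φm i j) x ≤ θ

variable {I : Fin N → Set ℝ} {θ : ℝ}

theorem IsContractingIFS.deriv_compFwd_pos (hF : IsContractingIFS I adj φm θ)
    (w : ℕ → Fin N) : ∀ k, (∀ j < k, adj (w j) (w (j + 1))) →
    ∀ x ∈ I (w 0), 0 < deriv (compFwd φm w k) x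
  | 0, _, x, _ => by simp [compFwd]
  | k + 1, hw, x, hx => by
    have hw' : ∀ j < k, adj (w j) (w (j + 1)) := fun j hj => hw j (hj.trans k.lt_succ_self)
    rw [deriv_compFwd_succ hF.contDiff w k hw]
    exact mul_pos (hF.deriv_pos _ _ (hw k k.lt_succ_self) _ (mapsTo_compFwd hF.mapsTo w k hw' hx))
      (hF.deriv_compFwd_pos w k hw' x hx)

theorem IsContractingIFS.deriv_compFwd_le (hF : IsContractingIFS I adj φm θ) (hθ : 0 ≤ θ)
    (w : ℕ → Fin N) : ∀ k, (∀ j < k, adj (w j) (w (j + 1))) →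
    ∀ x ∈ I (w 0), deriv (compFwd φm w k) x ≤ θ ^ k
  | 0, _, x, _ => by simp [compFwd]
  | k + 1, hw, x, hx => by
    have hw' : ∀ j < k, adj (w j) (w (j + 1)) := fun j hj => hw j (hj.trans k.lt_succ_self)
    rw [deriv_compFwd_succ hF.contDiff w k hw, pow_succ']
    exact mul_le_mul
      (hF.deriv_le _ _ (hw k k.lt_succ_self) _ (mapsTo_compFwd hF.mapsTo w k hw' hx))
      (hF.deriv_compFwd_le hθ w k hw' x hx) (hF.deriv_compFwd_pos w k hw' x hx).le hθ

noncomputable def zetaTerm (φm : Fin N → Fin N → ℝ → ℝ) (τ : ℝ → ℝ) (w : ℕ → Fin N) (x : ℝ)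
    (k : ℕ) : ℝ :=
  deriv (compFwd φm w (k + 1)) x * deriv τ (compFwd φm w (k + 1) x)

variable {τ : ℝ → ℝ} {M : ℝ}

theorem IsContractingIFS.abs_zetaTerm_le (hF : IsContractingIFS I adj φm θ) (hθ : 0 ≤ θ)
    (hM : ∀ i, ∀ y ∈ I i, |deriv τ y| ≤ M) {w : ℕ → Fin N} (hw : IsAdmissible adj w)
    {x : ℝ} (hx : x ∈ I (w 0)) (k : ℕ) :
    |zetaTerm φm τ w x k| ≤ θ ^ (k + 1) * M := by
  have hD := hF.deriv_compFwd_pos w (k + 1) (fun j _ => hw j) x hx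
  rw [zetaTerm, abs_mul, abs_of_pos hD]
  exact mul_le_mul (hF.deriv_compFwd_le hθ w (k + 1) (fun j _ => hw j) x hx)
    (hM _ _ (mapsTo_compFwd hF.mapsTo w (k + 1) (fun j _ => hw j) hx)) (abs_nonneg _)
    (pow_nonneg hθ _)

theorem summable_pow_succ_mul (hθ : 0 ≤ θ) (hθ1 : θ < 1) (M : ℝ) :
    Summable fun k : ℕ => θ ^ (k + 1) * M :=
  ((summable_nat_add_iff 1).2 (summable_geometric_of_lt_one hθ hθ1)).mul_right M

theorem IsContractingIFS.summable_zetaTerm (hF : IsContractingIFS I adj φm θ) (hθ : 0 ≤ θ)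
    (hθ1 : θ < 1) (hM : ∀ i, ∀ y ∈ I i, |deriv τ y| ≤ M) {w : ℕ → Fin N}
    (hw : IsAdmissible adj w) {x : ℝ} (hx : x ∈ I (w 0)) :
    Summable (zetaTerm φm τ w x) :=
  (summable_pow_succ_mul hθ hθ1 M).of_norm_bounded (hF.abs_zetaTerm_le hθ hM hw hx)

theorem zetaTerm_add (hφ : ∀ i j, adj i j → ContDiff ℝ 1 (φm i j)) {w : ℕ → Fin N}
    (hw : IsAdmissible adj w) (x : ℝ) (m k : ℕ) :
    zetaTerm φm τ w x (k + m) = deriv (compFwd φm w m) x *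
      zetaTerm φm τ (wordShift m w) (compFwd φm w m x) k := by
  have hidx : k + m + 1 = m + (k + 1) := by omega
  rw [zetaTerm, zetaTerm, hidx, deriv_compFwd_add hφ w m (k + 1) (fun j _ => hw j),
    compFwd_add w m (k + 1)]
  simp only [Function.comp_apply]
  ring

theorem IsContractingIFS.zetaW_eq_sum_add (hF : IsContractingIFS I adj φm θ) (hθ : 0 ≤ θ)
    (hθ1 : θ < 1) (hM : ∀ i, ∀ y ∈ I i, |deriv τ y| ≤ M) {w : ℕ → Fin N}
    (hw : IsAdmissible adj w) {x : ℝ} (hx : x ∈ I (w 0)) (m : ℕ) :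
    zetaW φm τ w x = -∑ k ∈ Finset.range m, zetaTerm φm τ w x k +
      deriv (compFwd φm w m) x * zetaW φm τ (wordShift m w) (compFwd φm w m x) := by
  change -∑' k, zetaTerm φm τ w x k = _ + _ * -∑' k, zetaTerm φm τ _ _ k
  rw [← (hF.summable_zetaTerm hθ hθ1 hM hw hx).sum_add_tsum_nat_add m]
  simp only [zetaTerm_add hF.contDiff hw, tsum_mul_left]
  ring

theorem IsContractingIFS.canMap_zetaW (hF : IsContractingIFS I adj φm θ) (hθ : 0 ≤ θ)
    (hθ1 : θ < 1) (hM : ∀ i, ∀ y ∈ I i, |deriv τ y| ≤ M) {w : ℕ → Fin N}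
    (hw : IsAdmissible adj w) {x : ℝ} (hx : x ∈ I (w 0)) :
    canMap τ (φm (w 0) (w 1)) (x, zetaW φm τ w x)
      = (φm (w 0) (w 1) x, zetaW φm τ (wordShift 1 w) (φm (w 0) (w 1) x)) := by
  have hD := (hF.deriv_pos _ _ (hw 0) x hx).ne'
  rw [canMap, hF.zetaW_eq_sum_add hθ hθ1 hM hw hx 1]
  simp only [Finset.range_one, Finset.sum_singleton, zetaTerm, zero_add, compFwd_one]
  congr 1
  field_simp
  ring

theorem IsContractingIFS.zetaW_sub_zetaW (hF : IsContractingIFS I adj φm θ) (hθ : 0 ≤ θ)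
    (hθ1 : θ < 1) (hM : ∀ i, ∀ y ∈ I i, |deriv τ y| ≤ M) {w w' : ℕ → Fin N}
    (hw : IsAdmissible adj w) (hw' : IsAdmissible adj w') {m : ℕ}
    (hagree : ∀ j ≤ m, w j = w' j) {x : ℝ} (hx : x ∈ I (w 0)) :
    zetaW φm τ w x - zetaW φm τ w' x = deriv (compFwd φm w m) x *
      (zetaW φm τ (wordShift m w) (compFwd φm w m x)
        - zetaW φm τ (wordShift m w') (compFwd φm w m x)) := by
  have hcomp : ∀ k ≤ m, compFwd φm w k = compFwd φm w' k := fun k hk =>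
    compFwd_congr fun n hn => hagree n (hn.trans hk)
  have hhead : ∀ k ∈ Finset.range m, zetaTerm φm τ w x k = zetaTerm φm τ w' x k := by
    intro k hk
    rw [zetaTerm, zetaTerm, hcomp (k + 1) (Finset.mem_range.1 hk)]
  rw [hF.zetaW_eq_sum_add hθ hθ1 hM hw hx m,
    hF.zetaW_eq_sum_add hθ hθ1 hM hw' (hagree 0 m.zero_le ▸ hx) m,
    Finset.sum_congr rfl hhead, hcomp m le_rfl]
  ring

theorem mapsTo_Kiter (hdisj : ∀ i j, i ≠ j → Disjoint (I i) (I j))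
    (hmaps : ∀ i j, adj i j → MapsTo (φm i j) (I i) (I j)) {a : ℕ} {i j : Fin N}
    (hij : adj i j) : MapsTo (φm i j) (Kiter I adj φm a ∩ I i) (Kiter I adj φm a) := by
  rintro _ ⟨hxK, hxI⟩
  simp only [Kiter, mem_iUnion] at hxK ⊢
  obtain ⟨v, hv, x₀, hx₀, rfl⟩ := hxK
  have hva : v a = i := by
    by_contra h
    exact disjoint_left.1 (hdisj _ _ h) (mapsTo_compFwd hmaps v a hv hx₀) hxI
  -- extend the word `v₀ ⋯ v_a` by the letter `j`, then drop its first letter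
  set v' : ℕ → Fin N := fun n => if n ≤ a then v n else j
  have hv'v : ∀ n ≤ a, v' n = v n := fun n hn => if_pos hn
  have hv' : ∀ k < a + 1, adj (v' k) (v' (k + 1)) := by
    intro k hk
    rcases Nat.lt_or_ge k a with hk' | hk'
    · rw [hv'v k hk'.le, hv'v (k + 1) hk']
      exact hv k hk'
    · obtain rfl : k = a := by omega
      rw [hv'v k le_rfl, hva, show v' (k + 1) = j from if_neg (by omega)]
      exact hij
  have hx₀' : x₀ ∈ I (v' 0) := hv'v 0 a.zero_le ▸ hx₀
  refine ⟨wordShift 1 v', fun k hk => hv' (1 + k) (by omega), φm (v' 0) (v' 1) x₀,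
    hmaps _ _ (hv' 0 a.succ_pos) hx₀', ?_⟩
  calc compFwd φm (wordShift 1 v') a (φm (v' 0) (v' 1) x₀)
      = compFwd φm v' (1 + a) x₀ := by rw [compFwd_add]; rfl
    _ = φm (v' a) (v' (a + 1)) (compFwd φm v' a x₀) := by rw [add_comm]; rfl
    _ = φm i j (compFwd φm v a x₀) := by
      rw [compFwd_congr hv'v, hv'v a le_rfl, hva, show v' (a + 1) = j from if_neg (by omega)]

theorem mapsTo_compFwd_Kiter (hdisj : ∀ i j, i ≠ j → Disjoint (I i) (I j))
    (hmaps : ∀ i j, adj i j → MapsTo (φm i j) (I i) (I j)) {a : ℕ} (w : ℕ → Fin N) :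
    ∀ k, (∀ j < k, adj (w j) (w (j + 1))) →
    MapsTo (compFwd φm w k) (Kiter I adj φm a ∩ I (w 0)) (Kiter I adj φm a ∩ I (w k))
  | 0, _ => mapsTo_id _
  | k + 1, hw => by
    have hk := mapsTo_compFwd_Kiter (a := a) hdisj hmaps w k fun j hj =>
      hw j (hj.trans k.lt_succ_self)
    exact fun x hx => ⟨mapsTo_Kiter hdisj hmaps (hw k k.lt_succ_self) (hk hx),
      hmaps _ _ (hw k k.lt_succ_self) (hk hx).2⟩

theorem ContinuousOn.apply_of_discrete {X α Y Z : Type*} [TopologicalSpace X]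
    [TopologicalSpace α] [DiscreteTopology α] [TopologicalSpace Y] [TopologicalSpace Z]
    {f : α → Y → Z} {s : Set α} (hf : ∀ a ∈ s, Continuous (f a)) {i : X → α} {g : X → Y}
    {t : Set X} (hi : Continuous i) (hg : ContinuousOn g t) (hit : MapsTo i t s) :
    ContinuousOn (fun x => f (i x) (g x)) t := by
  have huncurry : ContinuousOn (Function.uncurry f) (s ×ˢ univ) :=
    continuousOn_prod_of_discrete_left.2 fun a => by
      by_cases ha : a ∈ s
      · exact (hf a ha).continuousOn
      · simp [ha]
  exact huncurry.comp (hi.continuousOn.prodMk hg) fun x hx => ⟨hit hx, trivial⟩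

theorem continuousOn_compFwd (hφ : ∀ i j, adj i j → Continuous (φm i j)) :
    ∀ k, ContinuousOn (fun p : (ℕ → Fin N) × ℝ => compFwd φm p.1 k p.2)
      {p | ∀ j < k, adj (p.1 j) (p.1 (j + 1))}
  | 0 => continuousOn_snd
  | k + 1 =>
    ContinuousOn.apply_of_discrete (f := fun q : Fin N × Fin N => φm q.1 q.2)
      (s := {q | adj q.1 q.2}) (i := fun p : (ℕ → Fin N) × ℝ => (p.1 k, p.1 (k + 1)))
      (fun q hq => hφ _ _ hq) (by fun_prop)
      ((continuousOn_compFwd hφ k).mono fun _ hp j hj => hp j (hj.trans k.lt_succ_self))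
      fun _ hp => hp k k.lt_succ_self

theorem continuousOn_deriv_compFwd (hφ : ∀ i j, adj i j → ContDiff ℝ 1 (φm i j)) :
    ∀ k, ContinuousOn (fun p : (ℕ → Fin N) × ℝ => deriv (compFwd φm p.1 k) p.2)
      {p | ∀ j < k, adj (p.1 j) (p.1 (j + 1))}
  | 0 => continuousOn_const.congr fun p _ => deriv_id p.2
  | k + 1 => by
    have hsub : {p : (ℕ → Fin N) × ℝ | ∀ j < k + 1, adj (p.1 j) (p.1 (j + 1))} ⊆
        {p | ∀ j < k, adj (p.1 j) (p.1 (j + 1))} := fun _ hp j hj => hp j (hj.trans k.lt_succ_self)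
    have hhead := ContinuousOn.apply_of_discrete
      (f := fun q : Fin N × Fin N => deriv (φm q.1 q.2)) (s := {q | adj q.1 q.2})
      (i := fun p : (ℕ → Fin N) × ℝ => (p.1 k, p.1 (k + 1)))
      (fun q hq => (hφ _ _ hq).continuous_deriv le_rfl) (by fun_prop)
      ((continuousOn_compFwd (fun i j h => (hφ i j h).continuous) k).mono hsub)
      fun _ hp => hp k k.lt_succ_self
    exact (hhead.mul ((continuousOn_deriv_compFwd hφ k).mono hsub)).congr fun p hp =>
      deriv_compFwd_succ hφ p.1 k hp p.2

theorem isClosed_setOf_adj (k : ℕ) :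
    IsClosed {w : ℕ → Fin N | adj (w k) (w (k + 1))} :=
  (isClosed_discrete {q : Fin N × Fin N | adj q.1 q.2}).preimage
    (f := fun w : ℕ → Fin N => (w k, w (k + 1))) (by fun_prop)

theorem isClosed_setOf_snd_mem_fst_zero (hI : ∀ i, IsClosed (I i)) :
    IsClosed {p : (ℕ → Fin N) × ℝ | p.2 ∈ I (p.1 0)} := by
  have : {p : (ℕ → Fin N) × ℝ | p.2 ∈ I (p.1 0)} =
      ⋃ i, {p : (ℕ → Fin N) × ℝ | p.1 0 = i} ∩ Prod.snd ⁻¹' I i := by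
    ext p
    simp
  rw [this]
  exact isClosed_iUnion_of_finite fun i =>
    ((isClosed_discrete {i}).preimage (f := fun p : (ℕ → Fin N) × ℝ => p.1 0) (by fun_prop)).inter
      ((hI i).preimage continuous_snd)

theorem isCompact_Kiter (hI : ∀ i, IsCompact (I i)) (hφ : ∀ i j, adj i j → Continuous (φm i j))
    (a : ℕ) : IsCompact (Kiter I adj φm a) := by
  let S : Set ((ℕ → Fin N) × ℝ) := {p | (∀ j < a, adj (p.1 j) (p.1 (j + 1))) ∧ p.2 ∈ I (p.1 0)}
  have hK : Kiter I adj φm a = (fun p : (ℕ → Fin N) × ℝ => compFwd φm p.1 a p.2) '' S := by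
    ext x
    simp [Kiter, S, and_assoc]
  have hadm : IsClosed {p : (ℕ → Fin N) × ℝ | ∀ j < a, adj (p.1 j) (p.1 (j + 1))} := by
    have : {p : (ℕ → Fin N) × ℝ | ∀ j < a, adj (p.1 j) (p.1 (j + 1))} =
        ⋂ j, ⋂ (_ : j < a), Prod.fst ⁻¹' {w | adj (w j) (w (j + 1))} := by
      ext
      simp
    rw [this]
    exact isClosed_iInter fun j => isClosed_iInter fun _ =>
      (isClosed_setOf_adj j).preimage continuous_fst
  have hS : IsCompact S :=
    (isCompact_univ.prod (isCompact_iUnion hI)).of_isClosed_subset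
      (hadm.inter (isClosed_setOf_snd_mem_fst_zero fun i => (hI i).isClosed))
      fun p hp => ⟨trivial, mem_iUnion.2 ⟨_, hp.2⟩⟩
  rw [hK]
  exact hS.image_of_continuousOn ((continuousOn_compFwd hφ a).mono fun p hp => hp.1)

theorem exists_forall_abs_le_of_isCompact (hI : ∀ i, IsCompact (I i)) {f : ℝ → ℝ}
    (hf : Continuous f) : ∃ M, ∀ i, ∀ y ∈ I i, |f y| ≤ M := by
  obtain ⟨M, hM⟩ := (isCompact_iUnion hI).exists_bound_of_continuousOn hf.continuousOn
  exact ⟨M, fun i y hy => hM y (mem_iUnion.2 ⟨i, hy⟩)⟩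

def leafDomain (I : Fin N → Set ℝ) (adj : Fin N → Fin N → Prop) : Set ((ℕ → Fin N) × ℝ) :=
  {p | IsAdmissible adj p.1 ∧ p.2 ∈ I (p.1 0)}

theorem isClosed_leafDomain (hI : ∀ i, IsClosed (I i)) : IsClosed (leafDomain I adj) := by
  have hadm : {p : (ℕ → Fin N) × ℝ | IsAdmissible adj p.1} =
      ⋂ n, Prod.fst ⁻¹' {w | adj (w n) (w (n + 1))} := by
    ext
    simp [IsAdmissible]
  exact (hadm ▸ isClosed_iInter fun n => (isClosed_setOf_adj n).preimage continuous_fst).inter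
    (isClosed_setOf_snd_mem_fst_zero hI)

theorem IsContractingIFS.continuousOn_zetaW (hF : IsContractingIFS I adj φm θ) (hθ : 0 ≤ θ)
    (hθ1 : θ < 1) (hM : ∀ i, ∀ y ∈ I i, |deriv τ y| ≤ M) (hτ : Continuous (deriv τ)) :
    ContinuousOn (fun p : (ℕ → Fin N) × ℝ => zetaW φm τ p.1 p.2) (leafDomain I adj) := by
  have hsub : ∀ k, leafDomain I adj ⊆ {p | ∀ j < k, adj (p.1 j) (p.1 (j + 1))} :=
    fun _ p hp j _ => hp.1 j
  refine (continuousOn_tsum (fun k => ?_) (summable_pow_succ_mul hθ hθ1 M)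
    fun k p hp => hF.abs_zetaTerm_le hθ hM hp.1 hp.2 k).neg
  exact ((continuousOn_deriv_compFwd hF.contDiff (k + 1)).mono (hsub _)).mul
    (hτ.comp_continuousOn ((continuousOn_compFwd (fun i j h => (hF.contDiff i j h).continuous)
      (k + 1)).mono (hsub _)))

def IsMinimallyCaptive (I : Fin N → Set ℝ) (adj : Fin N → Fin N → Prop)
    (φm : Fin N → Fin N → ℝ → ℝ) (τ : ℝ → ℝ) (T : Set (ℝ × ℝ)) : Prop :=
  ∀ p ∈ T, ∀ i j j' : Fin N, p.1 ∈ I i → adj i j → adj i j' →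
    canMap τ (φm i j) p ∈ T → canMap τ (φm i j') p ∈ T → j = j'

section Captivity

variable {a : ℕ} {T : Set (ℝ × ℝ)}

theorem IsContractingIFS.zetaW_ne_of_isMinimallyCaptive (hF : IsContractingIFS I adj φm θ)
    (hθ : 0 ≤ θ) (hθ1 : θ < 1) (hM : ∀ i, ∀ y ∈ I i, |deriv τ y| ≤ M)
    (hdisj : ∀ i j, i ≠ j → Disjoint (I i) (I j))
    (hgraph : ∀ w, IsAdmissible adj w → ∀ x ∈ Kiter I adj φm a ∩ I (w 0),
      (x, zetaW φm τ w x) ∈ T)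
    (hT : IsMinimallyCaptive I adj φm τ T) {v v' : ℕ → Fin N} (hv : IsAdmissible adj v)
    (hv' : IsAdmissible adj v') (h0 : v 0 = v' 0) (h1 : v 1 ≠ v' 1) {y : ℝ}
    (hy : y ∈ Kiter I adj φm a ∩ I (v 0)) :
    zetaW φm τ v y ≠ zetaW φm τ v' y := by
  have hnext : ∀ u, IsAdmissible adj u → y ∈ Kiter I adj φm a ∩ I (u 0) →
      canMap τ (φm (u 0) (u 1)) (y, zetaW φm τ u y) ∈ T := fun u hu hyu => by
    rw [hF.canMap_zetaW hθ hθ1 hM hu hyu.2]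
    exact hgraph _ (hu.wordShift 1) _
      ⟨mapsTo_Kiter hdisj hF.mapsTo (hu 0) hyu, hF.mapsTo _ _ (hu 0) hyu.2⟩
  intro heq
  refine h1 (hT _ (hgraph v hv y hy) (v 0) (v 1) (v' 1) hy.2 (hv 0) (h0 ▸ hv' 0)
    (hnext v hv hy) ?_)
  rw [heq, h0]
  exact hnext v' hv' (h0 ▸ hy)

theorem IsContractingIFS.exists_pos_le_abs_zetaW_sub (hF : IsContractingIFS I adj φm θ)
    (hθ : 0 ≤ θ) (hθ1 : θ < 1) (hM : ∀ i, ∀ y ∈ I i, |deriv τ y| ≤ M)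
    (hτ : Continuous (deriv τ)) (hI : ∀ i, IsCompact (I i))
    (hdisj : ∀ i j, i ≠ j → Disjoint (I i) (I j))
    (hgraph : ∀ w, IsAdmissible adj w → ∀ x ∈ Kiter I adj φm a ∩ I (w 0),
      (x, zetaW φm τ w x) ∈ T)
    (hT : IsMinimallyCaptive I adj φm τ T) :
    ∃ C > 0, ∀ v v' : ℕ → Fin N, IsAdmissible adj v → IsAdmissible adj v' → v 0 = v' 0 →
      v 1 ≠ v' 1 → ∀ y ∈ Kiter I adj φm a ∩ I (v 0),
        C ≤ |zetaW φm τ v y - zetaW φm τ v' y| := by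
  let E : Set (((ℕ → Fin N) × (ℕ → Fin N)) × ℝ) :=
    {z | (z.1.1, z.2) ∈ leafDomain I adj ∧ (z.1.2, z.2) ∈ leafDomain I adj ∧
      z.1.1 0 = z.1.2 0 ∧ z.1.1 1 ≠ z.1.2 1 ∧ z.2 ∈ Kiter I adj φm a}
  have hleaf := isClosed_leafDomain (adj := adj) fun i => (hI i).isClosed
  have hE : IsCompact E := by
    refine (isCompact_univ.prod (isCompact_iUnion hI)).of_isClosed_subset ?_
      fun z hz => ⟨trivial, mem_iUnion.2 ⟨_, hz.1.2⟩⟩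
    refine (hleaf.preimage (by fun_prop)).inter <| (hleaf.preimage (by fun_prop)).inter <|
      (isClosed_eq (by fun_prop) (by fun_prop)).inter <| IsClosed.inter ?_
        ((isCompact_Kiter hI (fun i j h => (hF.contDiff i j h).continuous) a).isClosed.preimage
          continuous_snd)
    exact (isClosed_discrete {q : Fin N × Fin N | q.1 ≠ q.2}).preimage
      (f := fun z : ((ℕ → Fin N) × (ℕ → Fin N)) × ℝ => (z.1.1 1, z.1.2 1)) (by fun_prop)
  have hζ := hF.continuousOn_zetaW hθ hθ1 hM hτ
  have hfst : Continuous fun z : ((ℕ → Fin N) × (ℕ → Fin N)) × ℝ => (z.1.1, z.2) := by fun_prop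
  have hsnd : Continuous fun z : ((ℕ → Fin N) × (ℕ → Fin N)) × ℝ => (z.1.2, z.2) := by fun_prop
  have hcont : ContinuousOn (fun z : ((ℕ → Fin N) × (ℕ → Fin N)) × ℝ =>
      |zetaW φm τ z.1.1 z.2 - zetaW φm τ z.1.2 z.2|) E :=
    ((hζ.comp hfst.continuousOn fun z hz => hz.1).sub
      (hζ.comp hsnd.continuousOn fun z hz => hz.2.1)).abs
  have hpos : ∀ z ∈ E, 0 < |zetaW φm τ z.1.1 z.2 - zetaW φm τ z.1.2 z.2| := by
    rintro ⟨⟨v, v'⟩, y⟩ ⟨⟨hv, hy⟩, ⟨hv', -⟩, h0, h1, hyK⟩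
    exact abs_pos.2 <| sub_ne_zero.2 <|
      hF.zetaW_ne_of_isMinimallyCaptive hθ hθ1 hM hdisj hgraph hT hv hv' h0 h1 ⟨hyK, hy⟩
  obtain ⟨C, hC, hCE⟩ := hE.exists_forall_le' hcont hpos
  exact ⟨C, hC, fun v v' hv hv' h0 h1 y hy =>
    hCE ((v, v'), y) ⟨⟨hv, hy.2⟩, ⟨hv', show y ∈ I (v' 0) from h0 ▸ hy.2⟩, h0, h1, hy.1⟩⟩

end Captivity

end

theorem stable_leaf_separation_general
    {N : ℕ}
    (I : Fin N → Set ℝ)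
    (hIcc : ∀ i, ∃ a b : ℝ, a ≤ b ∧ I i = Set.Icc a b)
    (hIdisj : ∀ i j, i ≠ j → Disjoint (I i) (I j))
    (adj : Fin N → Fin N → Prop)
    (φm : Fin N → Fin N → ℝ → ℝ)
    (θ : ℝ) (hθ0 : 0 < θ) (hθ1 : θ < 1)
    (hsmooth : ∀ i j, adj i j → ContDiff ℝ (⊤ : ℕ∞) (φm i j))
    (hcontr : ∀ i j, adj i j → ∀ x ∈ I i, 0 < deriv (φm i j) x ∧ deriv (φm i j) x ≤ θ)
    (hinto : ∀ i j, adj i j → φm i j '' I i ⊆ interior (I j))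
    (τ : ℝ → ℝ) (hτ : ContDiff ℝ (⊤ : ℕ∞) τ)
    (ε : ℝ)
    (hmincapt : ∀ p ∈ trappedPhaseNbhd I adj φm τ ε, ∀ i j j' : Fin N,
      p.1 ∈ I i → adj i j → adj i j' →
      canMap τ (φm i j) p ∈ trappedPhaseNbhd I adj φm τ ε →
      canMap τ (φm i j') p ∈ trappedPhaseNbhd I adj φm τ ε → j = j')
    (a : ℕ)
    (hKa : ∀ w : Wplus N adj, ∀ x ∈ Kiter I adj φm a ∩ I (w.1 0),
      (x, zetaW φm τ w.1 x) ∈ trappedPhaseNbhd I adj φm τ ε) :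
    ∃ C : ℝ, 0 < C ∧ ∀ w w' : Wplus N adj, w.1 0 = w'.1 0 →
      ∀ n₁ : ℕ, 1 ≤ n₁ → (∀ k < n₁, w.1 k = w'.1 k) → w.1 n₁ ≠ w'.1 n₁ →
      ∀ x ∈ Kiter I adj φm a ∩ I (w.1 0),
        C * deriv (compFwd φm w.1 (n₁ - 1)) x ≤ |zetaW φm τ w.1 x - zetaW φm τ w'.1 x| := by
  have hI : ∀ i, IsCompact (I i) := fun i => by
    obtain ⟨c, d, -, hcd⟩ := hIcc i
    exact hcd ▸ isCompact_Icc
  have hF : IsContractingIFS I adj φm θ :=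
    { contDiff := fun i j h => (hsmooth i j h).of_le (by exact_mod_cast le_top)
      mapsTo := fun i j h x hx => interior_subset (hinto i j h (mem_image_of_mem _ hx))
      deriv_pos := fun i j h x hx => (hcontr i j h x hx).1
      deriv_le := fun i j h x hx => (hcontr i j h x hx).2 }
  have hτ' : Continuous (deriv τ) := hτ.continuous_deriv (by exact_mod_cast le_top)
  obtain ⟨M, hM⟩ := exists_forall_abs_le_of_isCompact hI hτ'
  obtain ⟨C, hC, hbranch⟩ := hF.exists_pos_le_abs_zetaW_sub hθ0.le hθ1 hM hτ' hI hIdisj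
    (fun w hw => hKa ⟨w, hw⟩) hmincapt
  refine ⟨C, hC, fun w w' _ n₁ hn₁ hagree hne x hx => ?_⟩
  obtain ⟨m, rfl⟩ : ∃ m, n₁ = m + 1 := ⟨n₁ - 1, by omega⟩
  have hD := hF.deriv_compFwd_pos w.1 m (fun j _ => w.2 j) x hx.2
  rw [Nat.add_sub_cancel, hF.zetaW_sub_zetaW hθ0.le hθ1 hM w.2 w'.2
    (fun j hj => hagree j (Nat.lt_succ_of_le hj)) hx.2, abs_mul, abs_of_pos hD, mul_comm C]
  refine mul_le_mul_of_nonneg_left ?_ hD.le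
  exact hbranch _ _ (IsAdmissible.wordShift w.2 m) (IsAdmissible.wordShift w'.2 m)
    (hagree m m.lt_succ_self) hne _
    (mapsTo_compFwd_Kiter hIdisj hF.mapsTo w.1 m (fun j _ => w.2 j) hx)

/-- **Separation of stable leaves under minimal captivity** (Lemma 7.8, second
inequality). Under the minimal captivity assumption, there is `C > 0` such that
for any two admissible right-infinite words with the same first letter, first
differing at position `n₁ ≥ 1`, and any `x ∈ K_a ∩ I_{w_0}`:
`|ζ_{w₊}(x) − ζ_{w'₊}(x)| ≥ C (φ_{w_{0,n₁−1}})'(x)`. -/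
theorem stable_leaf_separation
    {N : ℕ} (hN : 1 ≤ N)
    (I : Fin N → Set ℝ)
    (hIcc : ∀ i, ∃ a b : ℝ, a ≤ b ∧ I i = Set.Icc a b)
    (hIdisj : ∀ i j, i ≠ j → Disjoint (I i) (I j))
    (adj : Fin N → Fin N → Prop)
    (htrans : ∃ T : ℕ, 0 < T ∧ ∀ i j, ∃ p : ℕ → Fin N,
      p 0 = i ∧ p T = j ∧ ∀ k < T, adj (p k) (p (k + 1)))
    (φm : Fin N → Fin N → ℝ → ℝ)
    (θ : ℝ) (hθ0 : 0 < θ) (hθ1 : θ < 1)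
    (hsmooth : ∀ i j, adj i j → ContDiff ℝ (⊤ : ℕ∞) (φm i j))
    (hcontr : ∀ i j, adj i j → ∀ x ∈ I i, 0 < deriv (φm i j) x ∧ deriv (φm i j) x ≤ θ)
    (hinto : ∀ i j, adj i j → φm i j '' I i ⊆ interior (I j))
    (hsep : ∀ i j k l, adj i j → adj k l → (i, j) ≠ (k, l) →
      Disjoint (φm i j '' I i) (φm k l '' I k))
    (τ : ℝ → ℝ) (hτ : ContDiff ℝ (⊤ : ℕ∞) τ)
    (ε : ℝ) (hε : 0 < ε)
    (hmincapt : ∀ p ∈ trappedPhaseNbhd I adj φm τ ε, ∀ i j j' : Fin N,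
      p.1 ∈ I i → adj i j → adj i j' →
      canMap τ (φm i j) p ∈ trappedPhaseNbhd I adj φm τ ε →
      canMap τ (φm i j') p ∈ trappedPhaseNbhd I adj φm τ ε → j = j')
    (a : ℕ)
    (hKa : ∀ w : Wplus N adj, ∀ x ∈ Kiter I adj φm a ∩ I (w.1 0),
      (x, zetaW φm τ w.1 x) ∈ trappedPhaseNbhd I adj φm τ ε) :
    ∃ C : ℝ, 0 < C ∧ ∀ w w' : Wplus N adj, w.1 0 = w'.1 0 →
      ∀ n₁ : ℕ, 1 ≤ n₁ → (∀ k < n₁, w.1 k = w'.1 k) → w.1 n₁ ≠ w'.1 n₁ →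
      ∀ x ∈ Kiter I adj φm a ∩ I (w.1 0),
        C * deriv (compFwd φm w.1 (n₁ - 1)) x ≤ |zetaW φm τ w.1 x - zetaW φm τ w'.1 x| :=
  stable_leaf_separation_general I hIcc hIdisj adj φm θ hθ0 hθ1 hsmooth hcontr hinto τ hτ ε hmincapt
    a hKa
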